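/- Let G be an AH-algebra and let g ∈ G. Then the projection p := (g⁺)° satisfies p ∈ P ∩ CC(g) and (1−p)g ≤ 0 ≤ pg. In particular, G has the comparability property: for every g ∈ G there exists a projection p ∈ P ∩ C(g) ∩ C(P ∩ C(g)) with (1−p)g ≤ 0 ≤ pg. -/

import Mathlib

/-- An e-ring `(R,E)`: an associative ring `R` with unity together with a set `E ⊆ R`
of effects, satisfying the Foulis axioms.  `E⁺` is realized as the additive submonoid
closure of `E` (the set of all finite sums of effects). -/
structure ERing (R : Type*) [Ring R] where
  E : Set R
  zero_mem : (0 : R) ∈ E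
  one_mem : (1 : R) ∈ E
  compl_mem : ∀ e ∈ E, 1 - e ∈ E
  epos_i : ∀ a ∈ AddSubmonoid.closure E, -a ∈ AddSubmonoid.closure E → a = 0
  epos_ii : ∀ a ∈ AddSubmonoid.closure E, 1 - a ∈ AddSubmonoid.closure E → a ∈ E
  epos_iii : ∀ a ∈ AddSubmonoid.closure E, ∀ b ∈ AddSubmonoid.closure E,
    a * b = b * a → a * b ∈ AddSubmonoid.closure E
  epos_iv : ∀ a ∈ AddSubmonoid.closure E, ∀ b ∈ AddSubmonoid.closure E,
    a * b * a ∈ AddSubmonoid.closure E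
  epos_v : ∀ a ∈ AddSubmonoid.closure E, ∀ b ∈ AddSubmonoid.closure E,
    a * b * a = 0 → a * b = 0 ∧ b * a = 0
  epos_vi : ∀ a ∈ AddSubmonoid.closure E, ∀ b ∈ AddSubmonoid.closure E,
    (a - b) ^ 2 ∈ AddSubmonoid.closure E
  zero_ne_one : (0 : R) ≠ 1

namespace ERing

variable {R : Type*} [Ring R] (er : ERing R)

/-- `E⁺`, the set of all finite sums of effects; the positive cone of the directed group. -/
def Epos : Set R := (AddSubmonoid.closure er.E : Set R)

/-- The directed group `G = E⁺ - E⁺` of the e-ring. -/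
def G : Set R := {g | ∃ a ∈ er.Epos, ∃ b ∈ er.Epos, g = a - b}

/-- The partial order on the directed group: `g ≤ h` iff `h - g ∈ E⁺`. -/
def le (g h : R) : Prop := h - g ∈ er.Epos

/-- The set of projections `P = {p ∈ G : p = p²}`. -/
def P : Set R := {p | p ∈ er.G ∧ p = p ^ 2}

/-- The commutant in `G` of a subset `A ⊆ G`. -/
def commutant (A : Set R) : Set R := {g | g ∈ er.G ∧ ∀ a ∈ A, g * a = a * g}

/-- The bicommutant in `G` of a subset `A ⊆ G`. -/
def CC (A : Set R) : Set R := er.commutant (er.commutant A)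

/-- `s` is the supremum of `A` within the subset `S` (w.r.t. the e-ring order). -/
def IsSupIn (S A : Set R) (s : R) : Prop :=
  s ∈ S ∧ (∀ a ∈ A, er.le a s) ∧ ∀ b ∈ S, (∀ a ∈ A, er.le a b) → er.le s b

/-- `s` is the infimum of `A` within the subset `S` (w.r.t. the e-ring order). -/
def IsInfIn (S A : Set R) (s : R) : Prop :=
  s ∈ S ∧ (∀ a ∈ A, er.le s a) ∧ ∀ b ∈ S, (∀ a ∈ A, er.le b a) → er.le b s

/-- Quadratic annihilation property. -/
def HasQA : Prop := ∀ g ∈ er.G, ∀ h ∈ er.G, g * h ^ 2 * g = 0 → g * h = 0 ∧ h * g = 0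

/-- Commutative Vigier property: every ascending sequence of pairwise commuting elements
of `G` bounded above in `G` has a supremum in `G` which double commutes with the sequence. -/
def HasCV : Prop :=
  ∀ g : ℕ → R, (∀ n, g n ∈ er.G) → (∀ n, er.le (g n) (g (n + 1))) →
    (∀ m n, g m * g n = g n * g m) → (∃ b ∈ er.G, ∀ n, er.le (g n) b) →
    ∃ s, er.IsSupIn er.G (Set.range g) s ∧ s ∈ er.CC (Set.range g)

/-- `G` is an abstract Hermitian (AH) algebra: there is a semitransparent effect `½`,
`G` has quadratic annihilation, and `G` has the commutative Vigier property. -/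
def IsAH : Prop := (∃ h ∈ er.E, h + h = 1) ∧ er.HasQA ∧ er.HasCV

end ERing

namespace ERing

variable {R : Type*} [Ring R] (er : ERing R)

/-- `m` is the absolute value `|g| = (g²)^(1/2)` of `g`: `m ∈ G`, `0 ≤ m`, `m² = g²`. -/
def IsAbs (g m : R) : Prop := m ∈ er.G ∧ er.le 0 m ∧ m ^ 2 = g ^ 2

/-- `a` is the positive part `g⁺ = ½(|g| + g)` of `g`, i.e. `a ∈ G` and `a + a = |g| + g`. -/
def IsPosPart (g a : R) : Prop := a ∈ er.G ∧ ∃ m, er.IsAbs g m ∧ a + a = m + g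

/-- `b` is the negative part `g⁻ = ½(|g| − g)` of `g`, i.e. `b ∈ G` and `b + b = |g| − g`. -/
def IsNegPart (g b : R) : Prop := b ∈ er.G ∧ ∃ m, er.IsAbs g m ∧ b + b = m - g

/-- `p` is the carrier projection `g°` of `g`. -/
def IsCarrier (g p : R) : Prop := p ∈ er.P ∧ ∀ h ∈ er.G, (g * h = 0 ↔ p * h = 0)

end ERing

/-!
For `0 ≤ h ≤ 1` the iteration `xₖ₊₁ = xₖ + ½(h - xₖ²)` increases and stays below `1`; by the
Vigier property it has a supremum `s`, and comparing `s` with the upper bounds `s ∓ ½(h - s²)`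
gives `s² = h`. Likewise the supremum `p` of `1 - (1 - a)ᵏ` is a projection annihilating exactly
what `a` annihilates, so carriers exist; rescaling by powers of `½` removes the bound `1`.
With `m = |g|`, the elements `m ± g` have product `0` and sum `2m ≥ 0`; compressing `2m` by
`1 - ((m ∓ g)²)°` shows `m ± g ≥ 0`. Hence `g⁺ g⁻ = 0`, the carrier `p` of `g⁺` kills `g⁻`, and
`pg = g⁺ ≥ 0`, `(1 - p)g = -g⁻ ≤ 0`; carriers lie in the bicommutant, so `p ∈ CC(g)`.
-/

namespace ERing

variable {R : Type*} [Ring R] {er : ERing R}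

theorem zero_mem_Epos : (0 : R) ∈ er.Epos := AddSubmonoid.zero_mem _

theorem mem_Epos_of_mem_E {a : R} (ha : a ∈ er.E) : a ∈ er.Epos :=
  AddSubmonoid.subset_closure ha

theorem one_mem_Epos : (1 : R) ∈ er.Epos := mem_Epos_of_mem_E er.one_mem

theorem add_mem_Epos {a b : R} (ha : a ∈ er.Epos) (hb : b ∈ er.Epos) : a + b ∈ er.Epos :=
  AddSubmonoid.add_mem _ ha hb

theorem natCast_mem_Epos (n : ℕ) : (n : R) ∈ er.Epos := by
  show (n : R) ∈ AddSubmonoid.closure er.E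
  simpa using AddSubmonoid.nsmul_mem _ (one_mem_Epos (er := er)) n

theorem eq_zero_of_mem_Epos_of_neg_mem_Epos {a : R} (ha : a ∈ er.Epos) (ha' : -a ∈ er.Epos) :
    a = 0 :=
  er.epos_i a ha ha'

theorem eq_zero_of_add_eq_zero {a b : R} (ha : a ∈ er.Epos) (hb : b ∈ er.Epos)
    (hab : a + b = 0) : a = 0 :=
  eq_zero_of_mem_Epos_of_neg_mem_Epos ha (by rwa [neg_eq_of_add_eq_zero_right hab])

theorem mul_mem_Epos {a b : R} (ha : a ∈ er.Epos) (hb : b ∈ er.Epos) (hab : Commute a b) :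
    a * b ∈ er.Epos :=
  er.epos_iii a ha b hb hab

theorem pow_mem_Epos {a : R} (ha : a ∈ er.Epos) (n : ℕ) : a ^ n ∈ er.Epos := by
  induction n with
  | zero => simpa using one_mem_Epos
  | succ n ih => rw [pow_succ]; exact mul_mem_Epos ih ha ((Commute.refl a).pow_left n)

theorem exists_natCast_sub_mem_Epos {a : R} (ha : a ∈ er.Epos) :
    ∃ n : ℕ, (n : R) - a ∈ er.Epos := by
  induction ha using AddSubmonoid.closure_induction with
  | mem x hx => exact ⟨1, by simpa using mem_Epos_of_mem_E (er.compl_mem x hx)⟩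
  | zero => exact ⟨0, by simpa using zero_mem_Epos⟩
  | add x y _ _ hx hy =>
    obtain ⟨n, hn⟩ := hx
    obtain ⟨m, hm⟩ := hy
    exact ⟨n + m, by convert add_mem_Epos hn hm using 1; push_cast; abel⟩

theorem le_iff_sub_mem_Epos {a b : R} : er.le a b ↔ b - a ∈ er.Epos := Iff.rfl

theorem zero_le_iff {a : R} : er.le 0 a ↔ a ∈ er.Epos := by rw [le_iff_sub_mem_Epos, sub_zero]

theorem le_zero_iff {a : R} : er.le a 0 ↔ -a ∈ er.Epos := by rw [le_iff_sub_mem_Epos, zero_sub]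

theorem mem_G_of_mem_Epos {a : R} (ha : a ∈ er.Epos) : a ∈ er.G :=
  ⟨a, ha, 0, zero_mem_Epos, (sub_zero a).symm⟩

theorem one_mem_G : (1 : R) ∈ er.G := mem_G_of_mem_Epos one_mem_Epos

theorem add_mem_G {g h : R} (hg : g ∈ er.G) (hh : h ∈ er.G) : g + h ∈ er.G := by
  obtain ⟨a, ha, b, hb, rfl⟩ := hg
  obtain ⟨c, hc, d, hd, rfl⟩ := hh
  exact ⟨a + c, add_mem_Epos ha hc, b + d, add_mem_Epos hb hd, by abel⟩

theorem neg_mem_G {g : R} (hg : g ∈ er.G) : -g ∈ er.G := by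
  obtain ⟨a, ha, b, hb, rfl⟩ := hg
  exact ⟨b, hb, a, ha, (neg_sub a b)⟩

theorem sub_mem_G {g h : R} (hg : g ∈ er.G) (hh : h ∈ er.G) : g - h ∈ er.G := by
  simpa only [sub_eq_add_neg] using add_mem_G hg (neg_mem_G hh)

theorem sq_mem_Epos {g : R} (hg : g ∈ er.G) : g ^ 2 ∈ er.Epos := by
  obtain ⟨a, ha, b, hb, rfl⟩ := hg
  exact er.epos_vi a ha b hb

theorem mul_add_mul_mem_G {g h : R} (hg : g ∈ er.G) (hh : h ∈ er.G) : g * h + h * g ∈ er.G := by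
  have e : g * h + h * g = (g + h) ^ 2 - g ^ 2 - h ^ 2 := by noncomm_ring
  rw [e]
  exact sub_mem_G (sub_mem_G (mem_G_of_mem_Epos (sq_mem_Epos (add_mem_G hg hh)))
    (mem_G_of_mem_Epos (sq_mem_Epos hg))) (mem_G_of_mem_Epos (sq_mem_Epos hh))

theorem conj_mem_G_of_mem_Epos {g x : R} (hg : g ∈ er.G) (hx : x ∈ er.Epos) : g * x * g ∈ er.G := by
  obtain ⟨a, ha, b, hb, rfl⟩ := hg
  have e : (a - b) * x * (a - b)
      = (a * x * a + a * x * a + (b * x * b + b * x * b)) - (a + b) * x * (a + b) := by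
    noncomm_ring
  have hax := er.epos_iv a ha x hx
  have hbx := er.epos_iv b hb x hx
  rw [e]
  exact sub_mem_G (mem_G_of_mem_Epos (add_mem_Epos (add_mem_Epos hax hax) (add_mem_Epos hbx hbx)))
    (mem_G_of_mem_Epos (er.epos_iv _ (add_mem_Epos ha hb) x hx))

theorem conj_mem_G {g x : R} (hg : g ∈ er.G) (hx : x ∈ er.G) : g * x * g ∈ er.G := by
  obtain ⟨c, hc, d, hd, rfl⟩ := hx
  rw [mul_sub, sub_mul]
  exact sub_mem_G (conj_mem_G_of_mem_Epos hg hc) (conj_mem_G_of_mem_Epos hg hd)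

theorem mul_mem_G_of_central {c g : R} (hc : c ∈ er.Epos) (hcG : ∀ h ∈ er.G, Commute c h)
    (hg : g ∈ er.G) : c * g ∈ er.G := by
  obtain ⟨a, ha, b, hb, rfl⟩ := hg
  exact ⟨c * a, mul_mem_Epos hc ha (hcG a (mem_G_of_mem_Epos ha)),
    c * b, mul_mem_Epos hc hb (hcG b (mem_G_of_mem_Epos hb)), mul_sub c a b⟩

theorem one_sub_mem_Epos_of_mem_P {p : R} (hp : p ∈ er.P) : 1 - p ∈ er.Epos := by
  have e : (1 - p) ^ 2 = 1 - p := by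
    rw [show (1 - p) ^ 2 = 1 - p - p + p ^ 2 by noncomm_ring, ← hp.2]; abel
  rw [← e]
  exact sq_mem_Epos (sub_mem_G one_mem_G hp.1)

theorem mul_one_sub_eq_zero_of_mem_P {p : R} (hp : p ∈ er.P) : p * (1 - p) = 0 := by
  rw [mul_sub, mul_one, ← sq, ← hp.2, sub_self]

theorem HasQA.eq_zero_of_sq_eq_zero (hQA : er.HasQA) {g : R} (hg : g ∈ er.G) (h : g ^ 2 = 0) :
    g = 0 := by
  simpa using (hQA 1 one_mem_G g hg (by simpa using h)).1

theorem HasQA.eq_zero_of_add_self_eq_zero (hQA : er.HasQA) {g : R} (hg : g ∈ er.G)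
    (h : g + g = 0) : g = 0 := by
  have h2 : g ^ 2 + g ^ 2 = 0 := by rw [sq, ← mul_add, h, mul_zero]
  exact hQA.eq_zero_of_sq_eq_zero hg (eq_zero_of_add_eq_zero (sq_mem_Epos hg) (sq_mem_Epos hg) h2)

theorem HasQA.mul_eq_zero_swap (hQA : er.HasQA) {g h : R} (hg : g ∈ er.G) (hh : h ∈ er.G)
    (hgh : g * h = 0) : h * g = 0 := by
  refine (hQA h hh g hg ?_).1
  rw [sq, show h * (g * g) * h = h * g * (g * h) by noncomm_ring, hgh, mul_zero]

section Half

variable {u : R}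

theorem half_mul_add_self (huu : u + u = 1) (x : R) : u * (x + x) = x := by
  rw [mul_add, ← add_mul, huu, one_mul]

theorem half_pow_mul_two_pow (huu : u + u = 1) (k : ℕ) : u ^ k * (2 : R) ^ k = 1 := by
  rw [← (Commute.ofNat_right u 2).mul_pow, mul_two, huu, one_pow]

theorem two_pow_mul_half_pow (huu : u + u = 1) (k : ℕ) : (2 : R) ^ k * u ^ k = 1 := by
  rw [← (Commute.ofNat_left 2 u).mul_pow, two_mul, huu, one_pow]

theorem HasQA.commute_half (hQA : er.HasQA) (hu : u ∈ er.Epos) (huu : u + u = 1) {g : R}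
    (hg : g ∈ er.G) : Commute u g := by
  have hgg : g * u + g * u = g := by rw [← mul_add, huu, mul_one]
  have hug : u * g + u * g = g := by rw [← add_mul, huu, one_mul]
  have hd : g * u - u * g ∈ er.G := by
    rw [show g * u - u * g = (g * u + g * u) - (g * u + u * g) by abel, hgg]
    exact sub_mem_G hg (mul_add_mul_mem_G hg (mem_G_of_mem_Epos hu))
  have hdd : (g * u - u * g) + (g * u - u * g) = 0 := by
    rw [show (g * u - u * g) + (g * u - u * g) = (g * u + g * u) - (u * g + u * g) by abel,
      hgg, hug, sub_self]
  exact (sub_eq_zero.mp (hQA.eq_zero_of_add_self_eq_zero hd hdd)).symm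

theorem HasQA.pow_half_mul_mem_Epos (hQA : er.HasQA) (hu : u ∈ er.Epos) (huu : u + u = 1)
    (k : ℕ) {a : R} (ha : a ∈ er.Epos) : u ^ k * a ∈ er.Epos :=
  mul_mem_Epos (pow_mem_Epos hu k) ha
    ((hQA.commute_half hu huu (mem_G_of_mem_Epos ha)).pow_left k)

theorem HasQA.half_mul_mem_Epos (hQA : er.HasQA) (hu : u ∈ er.Epos) (huu : u + u = 1)
    {a : R} (ha : a ∈ er.Epos) : u * a ∈ er.Epos := by
  simpa using hQA.pow_half_mul_mem_Epos hu huu 1 ha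

theorem HasQA.half_mul_mem_G (hQA : er.HasQA) (hu : u ∈ er.Epos) (huu : u + u = 1)
    {g : R} (hg : g ∈ er.G) : u * g ∈ er.G :=
  mul_mem_G_of_central hu (fun _ hh => hQA.commute_half hu huu hh) hg

/-- Since `a ≤ n ≤ 4ⁿ`, rescaling by `u ^ (2n) = 4⁻ⁿ` moves `a` below `1`. -/
theorem HasQA.exists_one_sub_pow_half_mul_mem_Epos (hQA : er.HasQA) (hu : u ∈ er.Epos)
    (huu : u + u = 1) {a : R} (ha : a ∈ er.Epos) : ∃ k, 1 - u ^ (2 * k) * a ∈ er.Epos := by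
  obtain ⟨n, hn⟩ := exists_natCast_sub_mem_Epos ha
  have hle : n ≤ 2 ^ (2 * n) :=
    (Nat.lt_two_pow_self).le.trans (Nat.pow_le_pow_right (by norm_num) (by omega))
  have hbound : (2 : R) ^ (2 * n) - a ∈ er.Epos := by
    have e : (2 : R) ^ (2 * n) - a = ((2 ^ (2 * n) - n : ℕ) : R) + ((n : R) - a) := by
      push_cast [Nat.cast_sub hle]; abel
    rw [e]
    exact add_mem_Epos (natCast_mem_Epos _) hn
  refine ⟨n, ?_⟩
  rw [show 1 - u ^ (2 * n) * a = u ^ (2 * n) * ((2 : R) ^ (2 * n) - a) by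
    rw [mul_sub, half_pow_mul_two_pow huu]]
  exact hQA.pow_half_mul_mem_Epos hu huu _ hbound

end Half

theorem IsSupIn.neg_mem_Epos {x : ℕ → R} {s c : R} (hs : er.IsSupIn er.G (Set.range x) s)
    (hc : c ∈ er.G) (hub : ∀ k, s - c - x k ∈ er.Epos) : -c ∈ er.Epos := by
  have h : s - c - s ∈ er.Epos := hs.2.2 (s - c) (sub_mem_G hs.1 hc) (Set.forall_mem_range.2 hub)
  rwa [sub_sub_cancel_left] at h

theorem IsSupIn.eq_zero {x : ℕ → R} {s c : R} (hs : er.IsSupIn er.G (Set.range x) s)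
    (hc : c ∈ er.Epos) (hub : ∀ k, s - c - x k ∈ er.Epos) : c = 0 :=
  eq_zero_of_mem_Epos_of_neg_mem_Epos hc (hs.neg_mem_Epos (mem_G_of_mem_Epos hc) hub)

theorem HasCV.exists_isSupIn (hCV : er.HasCV) {h : R} {x : ℕ → R} (hh : h ∈ er.G)
    (hxG : ∀ k, x k ∈ er.G) (hmono : ∀ k, x (k + 1) - x k ∈ er.Epos)
    (hx1 : ∀ k, 1 - x k ∈ er.Epos) (hcomm : ∀ z ∈ er.G, Commute z h → ∀ k, Commute z (x k)) :
    ∃ s, er.IsSupIn er.G (Set.range x) s ∧ ∀ z ∈ er.G, Commute z h → Commute z s := by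
  obtain ⟨s, hs, hsCC⟩ := hCV x hxG hmono
    (fun m n => (hcomm (x m) (hxG m) (hcomm h hh (Commute.refl h) m).symm n).eq)
    ⟨1, one_mem_G, hx1⟩
  exact ⟨s, hs, fun z hz hzh =>
    (hsCC.2 z ⟨hz, Set.forall_mem_range.2 fun k => (hcomm z hz hzh k).eq⟩).symm⟩

/-- With `u = ½` and `0 ≤ h ≤ 1`, this sequence increases to `√h`. -/
def sqrtSeq (u h : R) : ℕ → R
  | 0 => 0
  | k + 1 => sqrtSeq u h k + u * (h - sqrtSeq u h k ^ 2)

section Sqrt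

variable {u h : R}

theorem sqrtSeq_succ_sub (k : ℕ) :
    sqrtSeq u h (k + 1) - sqrtSeq u h k = u * (h - sqrtSeq u h k ^ 2) :=
  add_sub_cancel_left _ _

variable (hQA : er.HasQA) (hu : u ∈ er.Epos) (huu : u + u = 1)
include hQA hu huu

theorem sqrtSeq_mem_G (hh : h ∈ er.G) (k : ℕ) : sqrtSeq u h k ∈ er.G := by
  induction k with
  | zero => exact mem_G_of_mem_Epos zero_mem_Epos
  | succ k ih =>
    exact add_mem_G ih
      (hQA.half_mul_mem_G hu huu (sub_mem_G hh (mem_G_of_mem_Epos (sq_mem_Epos ih))))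

theorem commute_sqrtSeq {z : R} (hz : z ∈ er.G) (hzh : Commute z h) (k : ℕ) :
    Commute z (sqrtSeq u h k) := by
  induction k with
  | zero => exact Commute.zero_right z
  | succ k ih =>
    exact ih.add_right
      ((hQA.commute_half hu huu hz).symm.mul_right (hzh.sub_right (ih.pow_right 2)))

theorem one_sub_sqrtSeq_mem_Epos (hh : h ∈ er.G) (h1 : 1 - h ∈ er.Epos) (k : ℕ) :
    1 - sqrtSeq u h k ∈ er.Epos := by
  cases k with
  | zero => simpa [sqrtSeq] using one_mem_Epos
  | succ k =>
    set x := sqrtSeq u h k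
    have e : u * ((1 - x) ^ 2 + (1 - h)) - (1 - (x + u * (h - x ^ 2))) = (u + u - 1) * (1 - x) := by
      noncomm_ring
    rw [huu, sub_self, zero_mul, sub_eq_zero] at e
    rw [sqrtSeq, ← e]
    exact hQA.half_mul_mem_Epos hu huu
      (add_mem_Epos (sq_mem_Epos (sub_mem_G one_mem_G (sqrtSeq_mem_G hQA hu huu hh k))) h1)

theorem sub_sqrtSeq_sq_mem_Epos (hh : h ∈ er.Epos) (h1 : 1 - h ∈ er.Epos) (k : ℕ) :
    h - sqrtSeq u h k ^ 2 ∈ er.Epos := by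
  have hhG := mem_G_of_mem_Epos hh
  induction k with
  | zero => simpa [sqrtSeq] using hh
  | succ k ih =>
    set x := sqrtSeq u h k
    set D := u * (h - x ^ 2)
    have hxG : x ∈ er.G := sqrtSeq_mem_G hQA hu huu hhG k
    have hxh : Commute x h := (commute_sqrtSeq hQA hu huu hhG (Commute.refl h) k).symm
    have hDx : Commute D x :=
      (hQA.commute_half hu huu hxG).mul_left (hxh.symm.sub_left ((Commute.refl x).pow_left 2))
    have hDD : h - x ^ 2 = D + D := by rw [← mul_add, half_mul_add_self huu]
    have e : (h - (x + D) ^ 2) - D * ((1 - x) + (1 - (x + D)))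
        = (h - x ^ 2 - (D + D)) + (D * x - x * D) := by
      noncomm_ring
    rw [← hDD, sub_self, hDx.eq, sub_self, add_zero, sub_eq_zero] at e
    have hx1 := one_sub_sqrtSeq_mem_Epos hQA hu huu hhG h1
    rw [sqrtSeq, e]
    refine mul_mem_Epos (hQA.half_mul_mem_Epos hu huu ih) (add_mem_Epos (hx1 k) (hx1 (k + 1))) ?_
    exact ((Commute.one_right D).sub_right hDx).add_right ((Commute.one_right D).sub_right
      (hDx.add_right (Commute.refl D)))

theorem sqrtSeq_mem_Epos (hh : h ∈ er.Epos) (h1 : 1 - h ∈ er.Epos) (k : ℕ) :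
    sqrtSeq u h k ∈ er.Epos := by
  induction k with
  | zero => exact zero_mem_Epos
  | succ k ih =>
    exact add_mem_Epos ih
      (hQA.half_mul_mem_Epos hu huu (sub_sqrtSeq_sq_mem_Epos hQA hu huu hh h1 k))

/-- The supremum `s` of `sqrtSeq u h` satisfies `s² = h`: both `u (h - s²)` and `u (s² - h)`
lower the upper bound `s` to another upper bound. -/
theorem exists_sqrt_of_le_one (hCV : er.HasCV) (hh : h ∈ er.Epos) (h1 : 1 - h ∈ er.Epos) :
    ∃ s ∈ er.Epos, s ^ 2 = h ∧ ∀ z ∈ er.G, Commute z h → Commute z s := by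
  have hhG := mem_G_of_mem_Epos hh
  set x := sqrtSeq u h
  have hxG := sqrtSeq_mem_G hQA hu huu hhG
  have hx1 := one_sub_sqrtSeq_mem_Epos hQA hu huu hhG h1
  have hD := sub_sqrtSeq_sq_mem_Epos hQA hu huu hh h1
  obtain ⟨s, hs, hsc⟩ := hCV.exists_isSupIn hhG hxG
    (fun k => by rw [sqrtSeq_succ_sub]; exact hQA.half_mul_mem_Epos hu huu (hD k)) hx1
    (fun z hz hzh => commute_sqrtSeq hQA hu huu hz hzh)
  have hub : ∀ k, s - x k ∈ er.Epos := fun k => hs.2.1 _ ⟨k, rfl⟩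
  have hsE : s ∈ er.Epos := by simpa [x, sqrtSeq] using hub 0
  have hs1 : 1 - s ∈ er.Epos := hs.2.2 1 one_mem_G (Set.forall_mem_range.2 hx1)
  have hsx : ∀ k, Commute s (x k) := fun k =>
    (hsc (x k) (hxG k) (commute_sqrtSeq hQA hu huu hhG (Commute.refl h) k).symm).symm
  set c := u * (h - s ^ 2)
  have hcG : c ∈ er.G :=
    hQA.half_mul_mem_G hu huu (sub_mem_G hhG (mem_G_of_mem_Epos (sq_mem_Epos hs.1)))
  have hc : -c ∈ er.Epos := by
    refine hs.neg_mem_Epos hcG fun k => ?_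
    have e : (s - c - x k) - ((s - x (k + 1)) + u * ((s + x k) * (s - x k)))
        = u * (s * x k - x k * s) := by
      simp only [c, x, sqrtSeq]; noncomm_ring
    rw [(hsx k).eq, sub_self, mul_zero, sub_eq_zero] at e
    rw [e]
    refine add_mem_Epos (hub (k + 1)) (hQA.half_mul_mem_Epos hu huu (mul_mem_Epos
      (add_mem_Epos hsE (sqrtSeq_mem_Epos hQA hu huu hh h1 k)) (hub k) ?_))
    exact ((Commute.refl s).sub_right (hsx k)).add_left ((hsx k).symm.sub_right (Commute.refl _))
  have hc' : c ∈ er.Epos := by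
    rw [← neg_neg c]
    refine hs.neg_mem_Epos (neg_mem_G hcG) fun k => ?_
    have e : (s - -c - x k) - (u * (h - x k ^ 2) + u * ((s - x k) * ((1 - s) + (1 - x k))))
        = (1 - (u + u)) * (s - x k) + u * (s * x k - x k * s) := by
      simp only [c]; noncomm_ring
    rw [(hsx k).eq, huu, sub_self, sub_self, mul_zero, zero_mul, add_zero, sub_eq_zero] at e
    rw [e]
    refine add_mem_Epos (hQA.half_mul_mem_Epos hu huu (hD k)) (hQA.half_mul_mem_Epos hu huu
      (mul_mem_Epos (hub k) (add_mem_Epos hs1 (hx1 k)) ?_))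
    exact ((Commute.one_right _).sub_right ((Commute.refl s).sub_left (hsx k).symm)).add_right
      ((Commute.one_right _).sub_right ((hsx k).sub_left (Commute.refl _)))
  have hcc : c + c = h - s ^ 2 := by rw [← add_mul, huu, one_mul]
  rw [eq_zero_of_mem_Epos_of_neg_mem_Epos hc' hc, add_zero] at hcc
  exact ⟨s, hsE, (sub_eq_zero.mp hcc.symm).symm, hsc⟩

theorem exists_sqrt (hCV : er.HasCV) (hh : h ∈ er.Epos) :
    ∃ r ∈ er.Epos, r ^ 2 = h ∧ ∀ z ∈ er.G, Commute z h → Commute z r := by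
  obtain ⟨k, hk⟩ := hQA.exists_one_sub_pow_half_mul_mem_Epos hu huu hh
  obtain ⟨s, hsE, hs2, hsc⟩ :=
    exists_sqrt_of_le_one hQA hu huu hCV (hQA.pow_half_mul_mem_Epos hu huu _ hh) hk
  have h2 : Commute ((2 : R) ^ k) s := (Commute.ofNat_left 2 s).pow_left k
  refine ⟨2 ^ k * s, mul_mem_Epos (by exact_mod_cast natCast_mem_Epos (2 ^ k)) hsE h2, ?_,
    fun z hz hzh => ((Commute.ofNat_right z 2).pow_right k).mul_right ?_⟩
  · rw [h2.mul_pow, hs2, ← pow_mul, ← mul_assoc, mul_comm k, two_pow_mul_half_pow huu, one_mul]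
  · exact hsc z hz (((hQA.commute_half hu huu hz).symm.pow_right _).mul_right hzh)

end Sqrt

theorem HasQA.eq_of_sq_eq_sq (hQA : er.HasQA) {r t : R} (hr : r ∈ er.Epos) (ht : t ∈ er.Epos)
    (hrt : Commute r t) (h2 : r ^ 2 = t ^ 2) : r = t := by
  set d := r - t
  have hdG : d ∈ er.G := sub_mem_G (mem_G_of_mem_Epos hr) (mem_G_of_mem_Epos ht)
  have hdr : Commute d r := (Commute.refl r).sub_left hrt.symm
  have hdt : Commute d t := hrt.sub_left (Commute.refl t)
  have hd0 : d * (r + t) = 0 := by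
    rw [show d * (r + t) = r ^ 2 - t ^ 2 + (r * t - t * r) by simp only [d]; noncomm_ring,
      h2, hrt.eq, sub_self, sub_self, add_zero]
  have hsum : d ^ 2 * r + d ^ 2 * t = 0 := by rw [← mul_add, sq, mul_assoc, hd0, mul_zero]
  have hr0 : d ^ 2 * r = 0 := eq_zero_of_add_eq_zero
    (mul_mem_Epos (sq_mem_Epos hdG) hr (hdr.pow_left 2))
    (mul_mem_Epos (sq_mem_Epos hdG) ht (hdt.pow_left 2)) hsum
  rw [hr0, zero_add] at hsum
  have hd3 : d ^ 2 * d = 0 := by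
    rw [show d ^ 2 * d = d ^ 2 * r - d ^ 2 * t by rw [← mul_sub], hr0, hsum, sub_zero]
  have hd4 : (d ^ 2) ^ 2 = 0 := by
    rw [show (d ^ 2) ^ 2 = d ^ 2 * d * d by noncomm_ring, hd3, zero_mul]
  exact sub_eq_zero.mp (hQA.eq_zero_of_sq_eq_zero hdG
    (hQA.eq_zero_of_sq_eq_zero (mem_G_of_mem_Epos (sq_mem_Epos hdG)) hd4))

section Carrier

variable {a p : R}

theorem IsCarrier.mul_one_sub_eq_zero (hp : er.IsCarrier a p) : a * (1 - p) = 0 :=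
  (hp.2 (1 - p) (sub_mem_G one_mem_G hp.1.1)).2 (mul_one_sub_eq_zero_of_mem_P hp.1)

theorem IsCarrier.one_sub_mul_eq_zero (hQA : er.HasQA) (ha : a ∈ er.G) (hp : er.IsCarrier a p) :
    (1 - p) * a = 0 :=
  hQA.mul_eq_zero_swap ha (sub_mem_G one_mem_G hp.1.1) hp.mul_one_sub_eq_zero

theorem IsCarrier.mul_eq_self (hQA : er.HasQA) (ha : a ∈ er.G) (hp : er.IsCarrier a p) :
    p * a = a := by
  have h := hp.one_sub_mul_eq_zero hQA ha
  rwa [sub_mul, one_mul, sub_eq_zero, eq_comm] at h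

/-- `p ∈ CC(a)`: for `z` commuting with `a`, the element `w = z - pzp - (1-p)z(1-p)` of `G`
is annihilated by `a`, hence by `p` on both sides, which forces `pz = pzp = zp`. -/
theorem IsCarrier.commute (hQA : er.HasQA) (hp : er.IsCarrier a p) {z : R} (hz : z ∈ er.G)
    (hza : Commute z a) : Commute z p := by
  have hpG := hp.1.1
  have hpp : p * p = p := by rw [← sq, ← hp.1.2]
  have haq := hp.mul_one_sub_eq_zero
  have hap : a * p = a := by rw [mul_sub, mul_one, sub_eq_zero] at haq; exact haq.symm
  set w := z - p * z * p - (1 - p) * z * (1 - p)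
  have hwG : w ∈ er.G :=
    sub_mem_G (sub_mem_G hz (conj_mem_G hpG hz)) (conj_mem_G (sub_mem_G one_mem_G hpG) hz)
  have haw : a * w = 0 := by
    rw [show a * w = a * z * (1 - p) - (a * p - a) * z * p - a * (1 - p) * z * (1 - p) by
      simp only [w]; noncomm_ring, hap, sub_self, haq, ← hza.eq]
    simp [mul_assoc, haq]
  have hpw : p * w = 0 := (hp.2 w hwG).1 haw
  have hwp : w * p = 0 := hQA.mul_eq_zero_swap hpG hwG hpw
  rw [show p * w = p * z - p * p * z * p - (p - p * p) * z * (1 - p) by simp only [w]; noncomm_ring,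
    hpp, sub_self, zero_mul, zero_mul, sub_zero, sub_eq_zero] at hpw
  rw [show w * p = z * p - p * z * (p * p) - (1 - p) * z * (p - p * p) by
    simp only [w]; noncomm_ring, hpp, sub_self, mul_zero, sub_zero, sub_eq_zero] at hwp
  exact hwp.trans hpw.symm

end Carrier

/-- For `0 ≤ a ≤ 1` this sequence increases to the carrier of `a`. -/
def carrierSeq (a : R) (k : ℕ) : R := 1 - (1 - a) ^ k

section CarrierSeq

variable {a : R}

theorem one_sub_carrierSeq (k : ℕ) : 1 - carrierSeq a k = (1 - a) ^ k := sub_sub_cancel _ _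

theorem carrierSeq_succ_sub (k : ℕ) : carrierSeq a (k + 1) - carrierSeq a k = (1 - a) ^ k * a := by
  simp only [carrierSeq, pow_succ]; noncomm_ring

theorem commute_carrierSeq {z : R} (hza : Commute z a) (k : ℕ) : Commute z (carrierSeq a k) :=
  (Commute.one_right z).sub_right (((Commute.one_right z).sub_right hza).pow_right k)

theorem carrierSeq_mul_eq_zero {v : R} (hav : a * v = 0) (k : ℕ) : carrierSeq a k * v = 0 := by
  have h : (1 - a) ^ k * v = v := by
    induction k with
    | zero => rw [pow_zero, one_mul]
    | succ k ih => rw [pow_succ, mul_assoc, sub_mul, one_mul, hav, sub_zero, ih]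
  rw [carrierSeq, sub_mul, one_mul, h, sub_self]

def IsCarrierSup (er : ERing R) (a p : R) : Prop :=
  er.IsSupIn er.G (Set.range (carrierSeq a)) p ∧ ∀ z ∈ er.G, Commute z a → Commute z p

variable {p : R}

theorem IsCarrierSup.sub_carrierSeq_mem_Epos (hp : er.IsCarrierSup a p) (k : ℕ) :
    p - carrierSeq a k ∈ er.Epos :=
  hp.1.2.1 _ ⟨k, rfl⟩

theorem IsCarrierSup.mem_Epos (hp : er.IsCarrierSup a p) : p ∈ er.Epos := by
  simpa [carrierSeq] using hp.sub_carrierSeq_mem_Epos 0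

theorem IsCarrierSup.one_sub_mem_Epos (hp : er.IsCarrierSup a p) (ha1 : 1 - a ∈ er.Epos) :
    1 - p ∈ er.Epos :=
  hp.1.2.2 1 one_mem_G (Set.forall_mem_range.2 fun k => by
    rw [le_iff_sub_mem_Epos, one_sub_carrierSeq]; exact pow_mem_Epos ha1 k)

theorem IsCarrierSup.one_sub_mul_eq_zero (hp : er.IsCarrierSup a p) (ha : a ∈ er.Epos)
    (ha1 : 1 - a ∈ er.Epos) : (1 - p) * a = 0 := by
  have hpa : Commute p a := (hp.2 a (mem_G_of_mem_Epos ha) (Commute.refl a)).symm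
  refine hp.1.eq_zero (mul_mem_Epos (hp.one_sub_mem_Epos ha1) ha
    ((Commute.one_left a).sub_left hpa)) fun k => ?_
  have e : p - (1 - p) * a - carrierSeq a k
      = (p - carrierSeq a (k + 1)) + (p - carrierSeq a k) * a := by
    simp only [carrierSeq, pow_succ]; noncomm_ring
  rw [e]
  exact add_mem_Epos (hp.sub_carrierSeq_mem_Epos (k + 1)) (mul_mem_Epos
    (hp.sub_carrierSeq_mem_Epos k) ha (hpa.sub_left (commute_carrierSeq (Commute.refl a) k).symm))

theorem IsCarrierSup.eq_sq (hp : er.IsCarrierSup a p) (ha : a ∈ er.Epos)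
    (ha1 : 1 - a ∈ er.Epos) : p = p ^ 2 := by
  have hpa : Commute p a := (hp.2 a (mem_G_of_mem_Epos ha) (Commute.refl a)).symm
  have hpE := hp.mem_Epos
  have hxq : ∀ k, carrierSeq a k * (1 - p) = 0 := carrierSeq_mul_eq_zero (by
    rw [← ((Commute.one_left a).sub_left hpa).eq]; exact hp.one_sub_mul_eq_zero ha ha1)
  have h0 : p * (1 - p) = 0 := by
    refine hp.1.eq_zero (mul_mem_Epos hpE (hp.one_sub_mem_Epos ha1)
      ((Commute.one_right p).sub_right (Commute.refl p))) fun k => ?_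
    rw [show p - p * (1 - p) - carrierSeq a k
        = (p - carrierSeq a k) * p - carrierSeq a k * (1 - p) by noncomm_ring, hxq, sub_zero]
    exact mul_mem_Epos (hp.sub_carrierSeq_mem_Epos k) hpE
      ((Commute.refl p).sub_left (commute_carrierSeq hpa k).symm)
  rwa [mul_sub, mul_one, sub_eq_zero, ← sq] at h0

/-- Rescale `h²` to some `f ≤ 1`; then `p - pf` is still an upper bound of `carrierSeq a`, so
`pf = 0`, hence `ph²p = 0`. -/
theorem IsCarrierSup.mul_eq_zero {u : R} (hQA : er.HasQA) (hu : u ∈ er.Epos) (huu : u + u = 1)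
    (hp : er.IsCarrierSup a p) (ha : a ∈ er.Epos) {h : R} (hh : h ∈ er.G) (hah : a * h = 0) :
    p * h = 0 := by
  have haG := mem_G_of_mem_Epos ha
  have hpE := hp.mem_Epos
  have hha : Commute h a := by
    rw [Commute, SemiconjBy, hah, hQA.mul_eq_zero_swap haG hh hah]
  have hph : Commute p h := (hp.2 h hh hha).symm
  obtain ⟨k, hf1⟩ := hQA.exists_one_sub_pow_half_mul_mem_Epos hu huu (sq_mem_Epos hh)
  set f := u ^ (2 * k) * h ^ 2
  have hfE : f ∈ er.Epos := hQA.pow_half_mul_mem_Epos hu huu _ (sq_mem_Epos hh)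
  have hpf : Commute p f :=
    ((hQA.commute_half hu huu hp.1.1).symm.pow_right _).mul_right (hph.pow_right 2)
  have haf : Commute a f :=
    ((hQA.commute_half hu huu haG).symm.pow_right _).mul_right (hha.symm.pow_right 2)
  have hxf : ∀ j, carrierSeq a j * f = 0 := carrierSeq_mul_eq_zero (by
    rw [← mul_assoc, ((hQA.commute_half hu huu haG).symm.pow_right _).eq, mul_assoc, sq,
      ← mul_assoc a, hah, zero_mul, mul_zero])
  have hpf0 : p * f = 0 := by
    refine hp.1.eq_zero (mul_mem_Epos hpE hfE hpf) fun j => ?_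
    rw [show p - p * f - carrierSeq a j = (p - carrierSeq a j) * (1 - f) - carrierSeq a j * f by
      noncomm_ring, hxf, sub_zero]
    exact mul_mem_Epos (hp.sub_carrierSeq_mem_Epos j) hf1 ((Commute.one_right _).sub_right
      (hpf.sub_left (commute_carrierSeq haf.symm j).symm))
  have hph2 : p * h ^ 2 = 0 := by
    rw [← one_mul (h ^ 2), ← two_pow_mul_half_pow huu (2 * k), mul_assoc, ← mul_assoc p,
      ((Commute.ofNat_right p 2).pow_right _).eq, mul_assoc, hpf0, mul_zero]
  exact (hQA p hp.1.1 h hh (by rw [hph2, zero_mul])).1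

theorem exists_isCarrier_of_le_one {u : R} (hQA : er.HasQA) (hu : u ∈ er.Epos) (huu : u + u = 1)
    (hCV : er.HasCV) (ha : a ∈ er.Epos) (ha1 : 1 - a ∈ er.Epos) : ∃ p, er.IsCarrier a p := by
  have haG := mem_G_of_mem_Epos ha
  obtain ⟨p, hp⟩ : ∃ p, er.IsCarrierSup a p := hCV.exists_isSupIn haG
    (fun k => sub_mem_G one_mem_G (mem_G_of_mem_Epos (pow_mem_Epos ha1 k)))
    (fun k => by
      rw [carrierSeq_succ_sub]
      exact mul_mem_Epos (pow_mem_Epos ha1 k) ha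
        (((Commute.one_left a).sub_left (Commute.refl a)).pow_left k))
    (fun k => by rw [one_sub_carrierSeq]; exact pow_mem_Epos ha1 k)
    (fun _ _ hza => commute_carrierSeq hza)
  have hap : a * p = a := by
    have h := hp.one_sub_mul_eq_zero ha ha1
    rwa [((Commute.one_left a).sub_left (hp.2 a haG (Commute.refl a)).symm).eq, mul_sub,
      mul_one, sub_eq_zero, eq_comm] at h
  exact ⟨p, ⟨hp.1.1, hp.eq_sq ha ha1⟩, fun h hh =>
    ⟨hp.mul_eq_zero hQA hu huu ha hh, fun hph => by rw [← hap, mul_assoc, hph, mul_zero]⟩⟩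

end CarrierSeq

theorem exists_isCarrier {u : R} (hQA : er.HasQA) (hu : u ∈ er.Epos) (huu : u + u = 1)
    (hCV : er.HasCV) {a : R} (ha : a ∈ er.Epos) : ∃ p, er.IsCarrier a p := by
  obtain ⟨k, hk⟩ := hQA.exists_one_sub_pow_half_mul_mem_Epos hu huu ha
  obtain ⟨p, hpP, hp⟩ :=
    exists_isCarrier_of_le_one hQA hu huu hCV (hQA.pow_half_mul_mem_Epos hu huu _ ha) hk
  refine ⟨p, hpP, fun h hh => Iff.trans ⟨fun hah => ?_, fun hah => ?_⟩ (hp h hh)⟩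
  · rw [mul_assoc, hah, mul_zero]
  · rw [← one_mul a, ← two_pow_mul_half_pow huu (2 * k), mul_assoc, mul_assoc, ← mul_assoc _ a,
      hah, mul_zero]

/-- Compressing `v + w` by `1 - (w²)°` kills `w` and fixes `v`. -/
theorem mem_Epos_of_mul_eq_zero_of_add_mem_Epos {u : R} (hQA : er.HasQA) (hu : u ∈ er.Epos)
    (huu : u + u = 1) (hCV : er.HasCV) {v w : R} (hv : v ∈ er.G) (hw : w ∈ er.G) (hvw : v * w = 0)
    (hsum : v + w ∈ er.Epos) : v ∈ er.Epos := by
  obtain ⟨p, hp⟩ := exists_isCarrier hQA hu huu hCV (sq_mem_Epos hw)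
  have hpv : p * v = 0 :=
    (hp.2 v hv).1 (by rw [sq, mul_assoc, hQA.mul_eq_zero_swap hv hw hvw, mul_zero])
  have hvp : v * p = 0 := hQA.mul_eq_zero_swap hp.1.1 hv hpv
  have hqw : (1 - p) * w = 0 := (hQA (1 - p) (sub_mem_G one_mem_G hp.1.1) w hw (by
    rw [hp.one_sub_mul_eq_zero hQA (mem_G_of_mem_Epos (sq_mem_Epos hw)), zero_mul])).1
  have e : (1 - p) * (v + w) * (1 - p) = v := by
    rw [show (1 - p) * (v + w) * (1 - p) = v - p * v - v * p + p * v * p + (1 - p) * w * (1 - p) by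
      noncomm_ring, hpv, hvp, hqw]
    simp
  rw [← e]
  exact er.epos_iv _ (one_sub_mem_Epos_of_mem_P hp.1) _ hsum

theorem IsPosPart.exists_eq {u g a : R} (huu : u + u = 1) (ha : er.IsPosPart g a) :
    ∃ m, er.IsAbs g m ∧ a = u * (m + g) ∧ a - g = u * (m - g) := by
  obtain ⟨-, m, hm, haa⟩ := ha
  refine ⟨m, hm, by rw [← haa, half_mul_add_self huu], ?_⟩
  rw [← half_mul_add_self huu (a - g), show a - g + (a - g) = a + a - g - g by abel, haa]
  congr 1
  abel

section PosPart

variable {u g m a : R} (hQA : er.HasQA) (hu : u ∈ er.Epos) (huu : u + u = 1) (hCV : er.HasCV)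

theorem IsAbs.mem_Epos (hm : er.IsAbs g m) : m ∈ er.Epos := zero_le_iff.1 hm.2.1

include hQA hu huu hCV

/-- By uniqueness of commuting positive square roots, `|g|` is the square root of `g²` obtained
from the Vigier property, which commutes with everything commuting with `g²`. -/
theorem IsAbs.commute (hg : g ∈ er.G) (hm : er.IsAbs g m) {z : R} (hz : z ∈ er.G)
    (hzg : Commute z g) : Commute z m := by
  obtain ⟨r, hrE, hr2, hrc⟩ := exists_sqrt hQA hu huu hCV (sq_mem_Epos hg)
  have hmr : Commute m r := hrc m hm.1 (by rw [← hm.2.2]; exact (Commute.refl m).pow_right 2)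
  rw [← hQA.eq_of_sq_eq_sq hrE hm.mem_Epos hmr.symm (hr2.trans hm.2.2.symm)]
  exact hrc z hz (hzg.pow_right 2)

theorem IsAbs.add_mem_Epos_and_sub_mem_Epos (hg : g ∈ er.G) (hm : er.IsAbs g m) :
    m + g ∈ er.Epos ∧ m - g ∈ er.Epos := by
  have hgm := (hm.commute hQA hu huu hCV hg hg (Commute.refl g)).eq
  have hmm : m + m ∈ er.Epos := add_mem_Epos hm.mem_Epos hm.mem_Epos
  constructor
  · refine mem_Epos_of_mul_eq_zero_of_add_mem_Epos hQA hu huu hCV (add_mem_G hm.1 hg)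
      (sub_mem_G hm.1 hg) ?_ (by rwa [add_add_sub_cancel])
    rw [show (m + g) * (m - g) = (m ^ 2 - g ^ 2) + (g * m - m * g) by noncomm_ring, hm.2.2, hgm,
      sub_self, sub_self, add_zero]
  · refine mem_Epos_of_mul_eq_zero_of_add_mem_Epos hQA hu huu hCV (sub_mem_G hm.1 hg)
      (add_mem_G hm.1 hg) ?_ (by rwa [sub_add_add_cancel])
    rw [show (m - g) * (m + g) = (m ^ 2 - g ^ 2) + (m * g - g * m) by noncomm_ring, hm.2.2, hgm,
      sub_self, sub_self, add_zero]

theorem exists_isPosPart (hg : g ∈ er.G) : ∃ a, er.IsPosPart g a := by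
  obtain ⟨m, hmE, hm2, -⟩ := exists_sqrt hQA hu huu hCV (sq_mem_Epos hg)
  exact ⟨u * (m + g), hQA.half_mul_mem_G hu huu (add_mem_G (mem_G_of_mem_Epos hmE) hg), m,
    ⟨mem_G_of_mem_Epos hmE, zero_le_iff.2 hmE, hm2⟩, by rw [← add_mul, huu, one_mul]⟩

theorem IsPosPart.mem_Epos (hg : g ∈ er.G) (ha : er.IsPosPart g a) : a ∈ er.Epos := by
  obtain ⟨m, hm, ha_eq, -⟩ := ha.exists_eq huu
  rw [ha_eq]
  exact hQA.half_mul_mem_Epos hu huu (hm.add_mem_Epos_and_sub_mem_Epos hQA hu huu hCV hg).1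

theorem IsPosPart.sub_mem_Epos (hg : g ∈ er.G) (ha : er.IsPosPart g a) : a - g ∈ er.Epos := by
  obtain ⟨m, hm, -, hb_eq⟩ := ha.exists_eq huu
  rw [hb_eq]
  exact hQA.half_mul_mem_Epos hu huu (hm.add_mem_Epos_and_sub_mem_Epos hQA hu huu hCV hg).2

theorem IsPosPart.mul_sub_eq_zero (hg : g ∈ er.G) (ha : er.IsPosPart g a) : a * (a - g) = 0 := by
  obtain ⟨m, hm, ha_eq, hb_eq⟩ := ha.exists_eq huu
  have hgm := (hm.commute hQA hu huu hCV hg hg (Commute.refl g)).eq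
  rw [hb_eq, ha_eq, mul_assoc, ← mul_assoc (m + g),
    ← (hQA.commute_half hu huu (add_mem_G hm.1 hg)).eq, mul_assoc u (m + g),
    show (m + g) * (m - g) = (m ^ 2 - g ^ 2) + (g * m - m * g) by noncomm_ring, hm.2.2, hgm,
    sub_self, sub_self, add_zero, mul_zero, mul_zero]

theorem IsPosPart.commute (hg : g ∈ er.G) (ha : er.IsPosPart g a) {z : R} (hz : z ∈ er.G)
    (hzg : Commute z g) : Commute z a := by
  obtain ⟨m, hm, ha_eq, -⟩ := ha.exists_eq huu
  rw [ha_eq]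
  exact (hQA.commute_half hu huu hz).symm.mul_right
    ((hm.commute hQA hu huu hCV hg hz hzg).add_right hzg)

theorem comparability_of_isPosPart {p : R} (hg : g ∈ er.G) (ha : er.IsPosPart g a)
    (hp : er.IsCarrier a p) :
    p ∈ er.P ∧ p ∈ er.CC {g} ∧ er.le ((1 - p) * g) 0 ∧ er.le 0 (p * g) := by
  have hbE := ha.sub_mem_Epos hQA hu huu hCV hg
  have hpb : p * (a - g) = 0 :=
    (hp.2 _ (mem_G_of_mem_Epos hbE)).1 (ha.mul_sub_eq_zero hQA hu huu hCV hg)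
  have hpg : p * g = a := by
    rw [show p * g = p * a - p * (a - g) by noncomm_ring, hp.mul_eq_self hQA ha.1, hpb, sub_zero]
  refine ⟨hp.1, ⟨hp.1.1, fun z hz => ?_⟩, ?_, ?_⟩
  · exact (hp.commute hQA hz.1 (ha.commute hQA hu huu hCV hg hz.1 (hz.2 g rfl))).eq.symm
  · rwa [le_zero_iff, sub_mul, one_mul, hpg, neg_sub]
  · rw [zero_le_iff, hpg]
    exact ha.mem_Epos hQA hu huu hCV hg

end PosPart

end ERing

/-- In an AH-algebra, `p := (g⁺)°` satisfies `p ∈ P ∩ CC(g)` and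
`(1−p)g ≤ 0 ≤ pg`; in particular `G` has the comparability property. -/
theorem stmt9 {R : Type*} [Ring R] (er : ERing R) (hAH : er.IsAH)
    (g a p : R) (hg : g ∈ er.G)
    (ha : er.IsPosPart g a) (hp : er.IsCarrier a p) :
    (p ∈ er.P ∧ p ∈ er.CC {g} ∧ er.le ((1 - p) * g) 0 ∧ er.le 0 (p * g)) ∧
    ∀ g' ∈ er.G, ∃ q, q ∈ er.P ∧ q ∈ er.commutant {g'} ∧
      q ∈ er.commutant (er.P ∩ er.commutant {g'}) ∧
      er.le ((1 - q) * g') 0 ∧ er.le 0 (q * g') := by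
  obtain ⟨⟨u, hu, huu⟩, hQA, hCV⟩ := hAH
  have hu' := ERing.mem_Epos_of_mem_E hu
  refine ⟨ERing.comparability_of_isPosPart hQA hu' huu hCV hg ha hp, fun g' hg' => ?_⟩
  obtain ⟨a', ha'⟩ := ERing.exists_isPosPart hQA hu' huu hCV hg'
  obtain ⟨q, hq⟩ := ERing.exists_isCarrier hQA hu' huu hCV (ha'.mem_Epos hQA hu' huu hCV hg')
  obtain ⟨hqP, hqCC, hle⟩ := ERing.comparability_of_isPosPart hQA hu' huu hCV hg' ha' hq
  have hg'C : g' ∈ er.commutant {g'} := ⟨hg', fun y hy => hy ▸ rfl⟩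
  exact ⟨q, hqP, ⟨hqP.1, fun y hy => hy ▸ hqCC.2 g' hg'C⟩,
    ⟨hqP.1, fun z hz => hqCC.2 z hz.2⟩, hle⟩
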